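/- arXiv:2210.02968 — 2 statements merged into one kernel-verified Lean document; each statement's English description precedes it below -/
import Mathlib

section
/- For every natural number k ≥ 2 and every permutation σ of Fin k that is a single k-cycle (σ is a cycle whose support is all of Fin k), the total displacement satisfies ∑ i : Fin k, |(σ i : ℤ) − (i : ℤ)| ≥ 2·(k − 1). -/
lemma cross_up (k : ℕ) (σ : Equiv.Perm (Fin k))
    (hcycle : σ.IsCycle) (hsupp : σ.support = Finset.univ)
    (t : ℕ) (ht : t + 1 < k) :
    ∃ i : Fin k, (i : ℕ) ≤ t ∧ t < (σ i : ℕ) := by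
  by_contra h
  push_neg at h
  have hk0 : 0 < k := by omega
  have hmove : ∀ x : Fin k, σ x ≠ x := by
    intro x
    have : x ∈ σ.support := by rw [hsupp]; exact Finset.mem_univ x
    exact Equiv.Perm.mem_support.mp this
  obtain ⟨n, hn⟩ := hcycle.exists_pow_eq (hmove ⟨0, hk0⟩) (hmove ⟨k - 1, by omega⟩)
  have key : ∀ m : ℕ, (((σ ^ m) ⟨0, hk0⟩ : Fin k) : ℕ) ≤ t := by
    intro m
    induction m with
    | zero => simp
    | succ m ih =>
      rw [pow_succ', Equiv.Perm.mul_apply]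
      exact h _ ih
  have := key n
  rw [hn] at this
  simp at this
  omega

lemma cross_down (k : ℕ) (σ : Equiv.Perm (Fin k))
    (hcycle : σ.IsCycle) (hsupp : σ.support = Finset.univ)
    (t : ℕ) (ht : t + 1 < k) :
    ∃ j : Fin k, ((σ j : Fin k) : ℕ) ≤ t ∧ t < (j : ℕ) := by
  obtain ⟨i, h1, h2⟩ := cross_up k σ⁻¹ hcycle.inv
    (by rw [Equiv.Perm.support_inv, hsupp]) t ht
  refine ⟨σ⁻¹ i, ?_, h2⟩
  simpa using h1

theorem kcycle_total_displacement_lower_bound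
    (k : ℕ) (hk : 2 ≤ k) (σ : Equiv.Perm (Fin k))
    (hcycle : σ.IsCycle) (hsupp : σ.support = Finset.univ) :
    2 * ((k : ℤ) - 1) ≤ ∑ i : Fin k, |((σ i : ℤ)) - (i : ℤ)| := by
  have key : ∀ i : Fin k, |((σ i : ℤ)) - (i : ℤ)| =
      ∑ t ∈ Finset.range (k - 1),
        (if min ((σ i : Fin k) : ℕ) (i : ℕ) ≤ t ∧ t < max ((σ i : Fin k) : ℕ) (i : ℕ)
          then (1 : ℤ) else 0) := by
    intro i
    have ha : ((σ i : Fin k) : ℕ) < k := (σ i).isLt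
    have hb : (i : ℕ) < k := i.isLt
    rw [Finset.sum_boole]
    have hfil : (Finset.range (k - 1)).filter
        (fun t => min ((σ i : Fin k) : ℕ) (i : ℕ) ≤ t ∧ t < max ((σ i : Fin k) : ℕ) (i : ℕ))
        = Finset.Ico (min ((σ i : Fin k) : ℕ) (i : ℕ)) (max ((σ i : Fin k) : ℕ) (i : ℕ)) := by
      ext t
      simp only [Finset.mem_filter, Finset.mem_range, Finset.mem_Ico]
      omega
    rw [hfil, Nat.card_Ico]
    rcases le_total (((σ i : Fin k) : ℕ)) ((i : ℕ)) with hle | hle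
    · have h1 : ((σ i : Fin k) : ℤ) ≤ (i : ℤ) := by exact_mod_cast hle
      rw [abs_of_nonpos (by omega), min_eq_left hle, max_eq_right hle]
      push_cast [Nat.cast_sub hle]
      ring
    · have h1 : ((i : ℤ)) ≤ ((σ i : Fin k) : ℤ) := by exact_mod_cast hle
      rw [abs_of_nonneg (by omega), min_eq_right hle, max_eq_left hle]
      push_cast [Nat.cast_sub hle]
      ring
  calc 2 * ((k : ℤ) - 1) = ∑ _t ∈ Finset.range (k - 1), (2 : ℤ) := by
        rw [Finset.sum_const, Finset.card_range, nsmul_eq_mul]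
        push_cast [Nat.cast_sub (by omega : 1 ≤ k)]
        omega
    _ ≤ ∑ t ∈ Finset.range (k - 1), ∑ i : Fin k,
        (if min ((σ i : Fin k) : ℕ) (i : ℕ) ≤ t ∧ t < max ((σ i : Fin k) : ℕ) (i : ℕ)
          then (1 : ℤ) else 0) := by
        apply Finset.sum_le_sum
        intro t htmem
        rw [Finset.mem_range] at htmem
        have ht : t + 1 < k := by omega
        obtain ⟨i, hi1, hi2⟩ := cross_up k σ hcycle hsupp t ht
        obtain ⟨j, hj1, hj2⟩ := cross_down k σ hcycle hsupp t ht
        have hij : i ≠ j := by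
          intro hEq
          rw [hEq] at hi1
          omega
        have hmono : ∑ x ∈ ({i, j} : Finset (Fin k)),
            (if min ((σ x : Fin k) : ℕ) (x : ℕ) ≤ t ∧ t < max ((σ x : Fin k) : ℕ) (x : ℕ)
              then (1 : ℤ) else 0) ≤ ∑ x : Fin k,
            (if min ((σ x : Fin k) : ℕ) (x : ℕ) ≤ t ∧ t < max ((σ x : Fin k) : ℕ) (x : ℕ)
              then (1 : ℤ) else 0) :=
          Finset.sum_le_sum_of_subset_of_nonneg (Finset.subset_univ _)
            (fun x _ _ => by split <;> norm_num)
        rw [Finset.sum_pair hij, if_pos ⟨by omega, by omega⟩, if_pos ⟨by omega, by omega⟩] at hmono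
        linarith
    _ = ∑ i : Fin k, |((σ i : ℤ)) - (i : ℤ)| := by
        rw [Finset.sum_comm]
        exact Finset.sum_congr rfl fun i _ => (key i).symm
end

section
/- For every natural number k ≥ 2 and every permutation σ of Fin k that is a single k-cycle (σ is a cycle whose support is all of Fin k), the number of inversions of σ, i.e. the cardinality of {(i, j) : Fin k × Fin k | i < j ∧ σ j < σ i}, is at least k − 1. -/
/-!
If `σ x > x`, at most `x` of the `σ x` positions carrying a value below `σ x` lie left of `x`,
so `x` is the left end of at least `σ x - x` inversions. Summing over `x`, the inversion number
is at least `∑ₓ (σ x - x)⁺`, which counts the pairs `(x, i)` with `x ≤ i < σ x`. For a cycle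
through all of `Fin k` every cut `i < k - 1` is jumped by some `x`, since otherwise the initial
segment `{x ≤ i}` would be a proper nonempty `σ`-invariant set; hence the sum is at least `k - 1`.
-/

open Equiv Finset

theorem Equiv.Perm.IsCycle.mem_of_mapsTo {α : Type*} [Finite α] {σ : Perm α} (hσ : σ.IsCycle)
    {s : Set α} (hs : Set.MapsTo σ s s) {x y : α} (hx : x ∈ s) (hσx : σ x ≠ x) (hσy : σ y ≠ y) :
    y ∈ s := by
  obtain ⟨n, -, rfl⟩ := (hσ.sameCycle hσx hσy).exists_nat_pow_eq
  rw [← Perm.iterate_eq_pow]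
  exact hs.iterate n hx

namespace Equiv.Perm

theorem exists_le_lt_apply_of_isCycle {n : ℕ} {σ : Perm (Fin n)} (hσ : σ.IsCycle)
    (hsupp : σ.support = univ) {i : ℕ} (hi : i + 1 < n) : ∃ x : Fin n, x ≤ i ∧ i < σ x := by
  by_contra! h
  have hmoved (x : Fin n) : σ x ≠ x := mem_support.mp (hsupp ▸ mem_univ x)
  have := hσ.mem_of_mapsTo (s := {x : Fin n | (x : ℕ) ≤ i}) h (x := ⟨i, by omega⟩)
    (y := ⟨i + 1, hi⟩) (by simp) (hmoved _) (hmoved _)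
  simp at this

theorem apply_sub_le_card_inversions_left {n : ℕ} (σ : Perm (Fin n)) (x : Fin n) :
    (σ x : ℕ) - x ≤ #{j | x < j ∧ σ j < σ x} := by
  have hcover :
      ({j | σ j < σ x} : Finset (Fin n)) ⊆ Iio x ∪ ({j | x < j ∧ σ j < σ x} : Finset _) := by
    intro j hj
    simp only [mem_filter, mem_univ, true_and, mem_union, mem_Iio] at hj ⊢
    rcases lt_trichotomy j x with h | rfl | h
    · exact .inl h
    · exact absurd hj (lt_irrefl _)
    · exact .inr ⟨h, hj⟩
  have hcard : #{j | σ j < σ x} = σ x := by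
    rw [← Fin.card_Iio (σ x), ← card_map σ.toEmbedding]
    congr 1
    ext j
    simp
  calc (σ x : ℕ) - x = #{j | σ j < σ x} - #(Iio x) := by rw [hcard, Fin.card_Iio]
    _ ≤ #{j | x < j ∧ σ j < σ x} := by
      have := (card_le_card hcover).trans (card_union_le _ _)
      omega

end Equiv.Perm

theorem ncard_inversions_eq_sum_card {α β : Type*} [Fintype α] [LinearOrder α] [LinearOrder β]
    (f : α → β) :
    {p : α × α | p.1 < p.2 ∧ f p.2 < f p.1}.ncard = ∑ x, #{j | x < j ∧ f j < f x} := by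
  rw [Set.ncard_eq_toFinset_card', Set.toFinset_ofPred, card_filter, Fintype.sum_prod_type]
  simp only [card_filter]

theorem Fin.sum_sub_eq_sum_card_le_lt {n : ℕ} (f : Fin n → Fin n) :
    ∑ x, ((f x : ℕ) - x) = ∑ i ∈ range (n - 1), #{x : Fin n | x ≤ i ∧ i < f x} := by
  have (x : Fin n) : (f x : ℕ) - x = #{i ∈ range (n - 1) | (x : ℕ) ≤ i ∧ i < f x} := by
    rw [← Nat.card_Ico]
    congr 1
    ext i
    simp only [mem_Ico, mem_filter, mem_range]
    omega
  simp only [this, card_filter]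
  exact sum_comm

theorem kcycle_inversions_lower_bound_general
    (k : ℕ) (σ : Equiv.Perm (Fin k))
    (hcycle : σ.IsCycle) (hsupp : σ.support = Finset.univ) :
    k - 1 ≤ {p : Fin k × Fin k | p.1 < p.2 ∧ σ p.2 < σ p.1}.ncard := by
  calc k - 1 = ∑ _i ∈ range (k - 1), 1 := by simp
    _ ≤ ∑ i ∈ range (k - 1), #{x : Fin k | x ≤ i ∧ i < σ x} := by
      refine sum_le_sum fun i hi => card_pos.2 ?_
      obtain ⟨x, hx⟩ := Perm.exists_le_lt_apply_of_isCycle hcycle hsupp (i := i)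
        (by rw [mem_range] at hi; omega)
      exact ⟨x, mem_filter.2 ⟨mem_univ x, hx⟩⟩
    _ = ∑ x, ((σ x : ℕ) - x) := (Fin.sum_sub_eq_sum_card_le_lt σ).symm
    _ ≤ ∑ x, #{j | x < j ∧ σ j < σ x} :=
      sum_le_sum fun x _ => σ.apply_sub_le_card_inversions_left x
    _ = _ := (ncard_inversions_eq_sum_card σ).symm

theorem kcycle_inversions_lower_bound
    (k : ℕ) (hk : 2 ≤ k) (σ : Equiv.Perm (Fin k))
    (hcycle : σ.IsCycle) (hsupp : σ.support = Finset.univ) :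
    k - 1 ≤ {p : Fin k × Fin k | p.1 < p.2 ∧ σ p.2 < σ p.1}.ncard :=
  kcycle_inversions_lower_bound_general k σ hcycle hsupp
end
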